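/- (Structure of LR bias in the treatment allocation, homogeneous market.) Let λ > 0 and 0 ≤ φ < φ̃. Define B_LR(a) = exp(−λ·φ·F(aφ̃ + (1−a)φ)) − exp(−λ·φ̃·F(aφ̃ + (1−a)φ)) for a ∈ [0,1] (GTE is constant in a, so this determines the bias up to an additive constant). Then the derivative dB_LR/da(a) is positive if and only if φ̃/φ < exp(λ·(φ̃ − φ)·F(aφ̃ + (1−a)φ)) (for φ > 0), and B_LR has at most one local maximum and no local minimum in the interior of (0,1); hence B_LR attains its infimum on [0,1] at a = 0 or a = 1. -/

import Mathlib

noncomputable def F : ℝ → ℝ := fun x => if x = 0 then 1 else (1 - Real.exp (-x)) / x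

noncomputable def BLR (lam φ φt : ℝ) : ℝ → ℝ := fun a =>
  Real.exp (-(lam * φ * F (a * φt + (1 - a) * φ)))
    - Real.exp (-(lam * φt * F (a * φt + (1 - a) * φ)))

/-!
Write `u(a) = F(aφ̃ + (1 - a)φ)`, which is strictly decreasing in `a` since `F` is.
By the chain rule `B_LR'(a)` is a positive multiple of `exp(λ(φ̃ - φ)u(a)) - φ̃/φ`, a strictly
decreasing function of `a`. Hence `B_LR'` changes sign at most once, from `+` to `-`: `B_LR`
strictly increases and then strictly decreases on `[0, 1]`. Such a function has no interior local
minimum, its only possible interior local maximum is the turning point, and its minimum over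
`[0, 1]` is attained at an endpoint.
-/

open Real Set Filter Topology

lemma IsLocalMin.not_eventually_lt {α β : Type*} [TopologicalSpace α] [Preorder β] {f : α → β}
    {a : α} {s : Set α} [(𝓝[s] a).NeBot] (h : IsLocalMin f a) : ¬ ∀ᶠ y in 𝓝[s] a, f y < f a :=
  fun hev =>
    let ⟨_, hle, hlt⟩ := ((h.filter_mono nhdsWithin_le_nhds).and hev).exists
    hle.not_gt hlt

lemma IsLocalMax.not_eventually_gt {α β : Type*} [TopologicalSpace α] [Preorder β] {f : α → β}
    {a : α} {s : Set α} [(𝓝[s] a).NeBot] (h : IsLocalMax f a) : ¬ ∀ᶠ y in 𝓝[s] a, f a < f y :=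
  IsLocalMin.not_eventually_lt (β := βᵒᵈ) h

section StrictMonoAntiOn

variable {α β : Type*} [LinearOrder α] [LinearOrder β] {f : α → β} {l c r a : α}

lemma min_le_of_strictMonoOn_of_strictAntiOn (hmono : StrictMonoOn f (Icc l c))
    (hanti : StrictAntiOn f (Icc c r)) (hc : c ∈ Icc l r) (ha : a ∈ Icc l r) :
    min (f l) (f r) ≤ f a := by
  rcases le_total a c with hac | hca
  · exact (min_le_left _ _).trans <| hmono.monotoneOn ⟨le_rfl, hc.1⟩ ⟨ha.1, hac⟩ ha.1
  · exact (min_le_right _ _).trans <| hanti.antitoneOn ⟨hca, ha.2⟩ ⟨hc.2, le_rfl⟩ ha.2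

variable [TopologicalSpace α] [OrderTopology α]

lemma StrictMonoOn.eventually_lt_nhdsLT (hf : StrictMonoOn f (Icc l c)) (ha : a ∈ Ioc l c) :
    ∀ᶠ y in 𝓝[<] a, f y < f a :=
  mem_of_superset (Ioo_mem_nhdsLT ha.1) fun _ hy =>
    hf ⟨hy.1.le, hy.2.le.trans ha.2⟩ (Ioc_subset_Icc_self ha) hy.2

lemma StrictMonoOn.eventually_gt_nhdsGT (hf : StrictMonoOn f (Icc l c)) (ha : a ∈ Ico l c) :
    ∀ᶠ y in 𝓝[>] a, f a < f y :=
  mem_of_superset (Ioo_mem_nhdsGT ha.2) fun _ hy =>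
    hf (Ico_subset_Icc_self ha) ⟨ha.1.trans hy.1.le, hy.2.le⟩ hy.1

lemma StrictAntiOn.eventually_gt_nhdsLT (hf : StrictAntiOn f (Icc c r)) (ha : a ∈ Ioc c r) :
    ∀ᶠ y in 𝓝[<] a, f a < f y :=
  StrictMonoOn.eventually_lt_nhdsLT (β := βᵒᵈ) hf ha

lemma StrictAntiOn.eventually_lt_nhdsGT (hf : StrictAntiOn f (Icc c r)) (ha : a ∈ Ico c r) :
    ∀ᶠ y in 𝓝[>] a, f y < f a :=
  StrictMonoOn.eventually_gt_nhdsGT (β := βᵒᵈ) hf ha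

variable [DenselyOrdered α] [NoMinOrder α] [NoMaxOrder α]

lemma not_isLocalMin_of_strictMonoOn_of_strictAntiOn (hmono : StrictMonoOn f (Icc l c))
    (hanti : StrictAntiOn f (Icc c r)) (ha : a ∈ Ioo l r) : ¬ IsLocalMin f a := fun hmin => by
  rcases le_or_gt a c with hac | hca
  · exact hmin.not_eventually_lt (hmono.eventually_lt_nhdsLT ⟨ha.1, hac⟩)
  · exact hmin.not_eventually_lt (hanti.eventually_lt_nhdsGT ⟨hca.le, ha.2⟩)

lemma eq_of_isLocalMax_of_strictMonoOn_of_strictAntiOn (hmono : StrictMonoOn f (Icc l c))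
    (hanti : StrictAntiOn f (Icc c r)) (ha : a ∈ Ioo l r) (hmax : IsLocalMax f a) : a = c := by
  rcases lt_trichotomy a c with hac | rfl | hca
  · exact (hmax.not_eventually_gt (hmono.eventually_gt_nhdsGT ⟨ha.1.le, hac⟩)).elim
  · rfl
  · exact (hmax.not_eventually_gt (hanti.eventually_gt_nhdsLT ⟨hca, ha.2.le⟩)).elim

end StrictMonoAntiOn

theorem exists_strictMonoOn_strictAntiOn_of_sign_deriv {f s : ℝ → ℝ} {l r : ℝ} (hlr : l ≤ r)
    (hf : ContinuousOn f (Icc l r)) (hs : StrictAntiOn s (Icc l r))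
    (hsign : ∀ a ∈ Ioo l r, SignType.sign (deriv f a) = SignType.sign (s a)) :
    ∃ c ∈ Icc l r, StrictMonoOn f (Icc l c) ∧ StrictAntiOn f (Icc c r) := by
  set S := insert l {a ∈ Icc l r | 0 < s a}
  have hS : S ⊆ Icc l r := insert_subset ⟨le_rfl, hlr⟩ (sep_subset _ _)
  have hbdd : BddAbove S := bddAbove_Icc.mono hS
  set c := sSup S
  have hc : c ∈ Icc l r :=
    ⟨le_csSup hbdd (mem_insert _ _), csSup_le (insert_nonempty _ _) fun a ha => (hS ha).2⟩
  refine ⟨c, hc, strictMonoOn_of_deriv_pos (convex_Icc l c)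
    (hf.mono (Icc_subset_Icc_right hc.2)) fun a ha => ?_,
    strictAntiOn_of_deriv_neg (convex_Icc c r)
    (hf.mono (Icc_subset_Icc_left hc.1)) fun a ha => ?_⟩
  · rw [interior_Icc] at ha
    obtain ⟨b, hbS, hab⟩ := exists_lt_of_lt_csSup (insert_nonempty _ _) ha.2
    obtain ⟨hb, hsb⟩ : b ∈ Icc l r ∧ 0 < s b := hbS.resolve_left (ha.1.trans hab).ne'
    have hsa : 0 < s a := hsb.trans (hs ⟨ha.1.le, ha.2.le.trans hc.2⟩ hb hab)
    rwa [← sign_eq_one_iff, hsign a ⟨ha.1, ha.2.trans_le hc.2⟩, sign_eq_one_iff]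
  · rw [interior_Icc] at ha
    have hm : (c + a) / 2 ∈ Ioo c a := ⟨by linarith [ha.1], by linarith [ha.1]⟩
    have hmlr : (c + a) / 2 ∈ Icc l r := ⟨hc.1.trans hm.1.le, hm.2.le.trans ha.2.le⟩
    have hsm : s ((c + a) / 2) ≤ 0 := not_lt.mp fun hpos =>
      notMem_of_csSup_lt hm.1 hbdd (Or.inr ⟨hmlr, hpos⟩)
    have hsa : s a < 0 := (hs hmlr ⟨hc.1.trans ha.1.le, ha.2.le⟩ hm.2).trans_le hsm
    rwa [← sign_eq_neg_one_iff, hsign a ⟨hc.1.trans_lt ha.1, ha.2⟩, sign_eq_neg_one_iff]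

lemma exp_neg_mul_add_one_sub_one_div_sq_neg {x : ℝ} (hx : x ≠ 0) :
    (exp (-x) * (x + 1) - 1) / x ^ 2 < 0 := by
  refine div_neg_of_neg_of_pos (sub_neg.mpr ?_) (by positivity)
  calc exp (-x) * (x + 1) < exp (-x) * exp x := by gcongr; exact add_one_lt_exp hx
    _ = 1 := by rw [← exp_add, neg_add_cancel, exp_zero]

lemma hasDerivAt_F {x : ℝ} (hx : x ≠ 0) :
    HasDerivAt F ((exp (-x) * (x + 1) - 1) / x ^ 2) x := by
  have hF : F =ᶠ[𝓝 x] fun y => (1 - exp (-y)) / y := by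
    filter_upwards [eventually_ne_nhds hx] with y hy
    simp [F, hy]
  have hnum : HasDerivAt (fun y => 1 - exp (-y)) (exp (-x)) x := by
    simpa using ((hasDerivAt_neg x).exp).const_sub 1
  refine ((hnum.div (hasDerivAt_id' x) hx).congr_of_eventuallyEq hF).congr_deriv ?_
  field_simp
  ring

lemma strictAntiOn_F : StrictAntiOn F (Ioi 0) := by
  refine strictAntiOn_of_deriv_neg (convex_Ioi 0)
    (fun x hx => (hasDerivAt_F (ne_of_gt hx)).continuousAt.continuousWithinAt) fun x hx => ?_
  rw [interior_Ioi] at hx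
  rw [(hasDerivAt_F (ne_of_gt hx)).deriv]
  exact exp_neg_mul_add_one_sub_one_div_sq_neg (ne_of_gt hx)

lemma hasDerivAt_BLR {lam φ φt a d : ℝ} (hF : HasDerivAt F d (a * φt + (1 - a) * φ)) :
    HasDerivAt (BLR lam φ φt) (lam * (φt - φ) * d *
      (φt * exp (-(lam * φt * F (a * φt + (1 - a) * φ)))
        - φ * exp (-(lam * φ * F (a * φt + (1 - a) * φ))))) a := by
  have hmix : HasDerivAt (fun b => b * φt + (1 - b) * φ) (φt - φ) a :=
    (((hasDerivAt_id' a).mul_const φt).add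
      (((hasDerivAt_id' a).const_sub 1).mul_const φ)).congr_deriv (by ring)
  have hu := hF.comp a hmix
  refine ((((hu.const_mul (lam * φ)).neg).exp).sub
    (((hu.const_mul (lam * φt)).neg).exp)).congr_deriv ?_
  simp only [Pi.neg_apply, Function.comp_apply]
  ring

lemma sign_deriv_BLR {lam φ φt a : ℝ} (hlam : 0 < lam) (hφ : 0 < φ) (hlt : φ < φt)
    (hx : 0 < a * φt + (1 - a) * φ) :
    SignType.sign (deriv (BLR lam φ φt) a) =
      SignType.sign (exp (lam * (φt - φ) * F (a * φt + (1 - a) * φ)) - φt / φ) := by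
  set x := a * φt + (1 - a) * φ
  set u := F x
  set d := (exp (-x) * (x + 1) - 1) / x ^ 2
  rw [(hasDerivAt_BLR (lam := lam) (hasDerivAt_F hx.ne')).deriv]
  -- `φ e^{-λφu} = φ e^{-λφ̃u} e^{λ(φ̃-φ)u}` puts the factor `e^{λ(φ̃-φ)u} - φ̃/φ` in front
  have hexp : exp (-(lam * φ * u)) = exp (-(lam * φt * u)) * exp (lam * (φt - φ) * u) := by
    rw [← exp_add]; ring_nf
  have hpos : 0 < lam * (φt - φ) * -d * φ * exp (-(lam * φt * u)) := by
    have := sub_pos.mpr hlt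
    have := neg_pos.mpr (exp_neg_mul_add_one_sub_one_div_sq_neg hx.ne')
    positivity
  rw [show lam * (φt - φ) * d * (φt * exp (-(lam * φt * u)) - φ * exp (-(lam * φ * u))) =
      (lam * (φt - φ) * -d * φ * exp (-(lam * φt * u))) * (exp (lam * (φt - φ) * u) - φt / φ) by
        rw [hexp]; field_simp; ring,
    sign_mul, sign_pos hpos, one_mul]

lemma mul_add_one_sub_mul_pos {φ φt a : ℝ} (hφ : 0 < φ) (hφt : 0 < φt) (ha : a ∈ Icc (0 : ℝ) 1) :
    0 < a * φt + (1 - a) * φ := by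
  obtain ⟨h0, h1⟩ := ha
  rcases h0.eq_or_lt with rfl | h0
  · simpa
  · exact add_pos_of_pos_of_nonneg (mul_pos h0 hφt) (mul_nonneg (sub_nonneg.mpr h1) hφ.le)

lemma strictAntiOn_F_mul_add_one_sub_mul {φ φt : ℝ} (hφ : 0 < φ) (hlt : φ < φt) :
    StrictAntiOn (fun a => F (a * φt + (1 - a) * φ)) (Icc 0 1) := fun a ha b hb hab =>
  strictAntiOn_F (mul_add_one_sub_mul_pos hφ (hφ.trans hlt) ha)
    (mul_add_one_sub_mul_pos hφ (hφ.trans hlt) hb) (by nlinarith)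

theorem stmt_8 (lam φ φt : ℝ) (hlam : 0 < lam) (hφ : 0 < φ) (hlt : φ < φt) :
    (∀ a ∈ Set.Ioo (0:ℝ) 1,
      (0 < deriv (BLR lam φ φt) a ↔
        φt / φ < Real.exp (lam * (φt - φ) * F (a * φt + (1 - a) * φ)))) ∧
    (∀ a ∈ Set.Ioo (0:ℝ) 1, ¬ IsLocalMin (BLR lam φ φt) a) ∧
    (∀ a ∈ Set.Ioo (0:ℝ) 1, ∀ b ∈ Set.Ioo (0:ℝ) 1,
      IsLocalMax (BLR lam φ φt) a → IsLocalMax (BLR lam φ φt) b → a = b) ∧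
    (∀ a ∈ Set.Icc (0:ℝ) 1,
      min (BLR lam φ φt 0) (BLR lam φ φt 1) ≤ BLR lam φ φt a) := by
  have hx : ∀ a ∈ Icc (0 : ℝ) 1, 0 < a * φt + (1 - a) * φ := fun a ha =>
    mul_add_one_sub_mul_pos hφ (hφ.trans hlt) ha
  have hsign : ∀ a ∈ Ioo (0 : ℝ) 1, SignType.sign (deriv (BLR lam φ φt) a) =
      SignType.sign (exp (lam * (φt - φ) * F (a * φt + (1 - a) * φ)) - φt / φ) :=
    fun a ha => sign_deriv_BLR hlam hφ hlt (hx a (Ioo_subset_Icc_self ha))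
  have hcont : ContinuousOn (BLR lam φ φt) (Icc 0 1) := fun a ha =>
    (hasDerivAt_BLR (hasDerivAt_F (hx a ha).ne')).continuousAt.continuousWithinAt
  have hanti_sign : StrictAntiOn
      (fun a => exp (lam * (φt - φ) * F (a * φt + (1 - a) * φ)) - φt / φ) (Icc 0 1) :=
    fun a ha b hb hab => sub_lt_sub_right (exp_lt_exp.mpr (mul_lt_mul_of_pos_left
      (strictAntiOn_F_mul_add_one_sub_mul hφ hlt ha hb hab) (by nlinarith))) _
  obtain ⟨c, hc, hmono, hanti⟩ :=
    exists_strictMonoOn_strictAntiOn_of_sign_deriv zero_le_one hcont hanti_sign hsign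
  refine ⟨fun a ha => ?_,
    fun a ha => not_isLocalMin_of_strictMonoOn_of_strictAntiOn hmono hanti ha,
    fun a ha b hb hmaxa hmaxb => ?_,
    fun a ha => min_le_of_strictMonoOn_of_strictAntiOn hmono hanti hc ha⟩
  · rw [← sign_eq_one_iff, hsign a ha, sign_eq_one_iff, sub_pos]
  · exact (eq_of_isLocalMax_of_strictMonoOn_of_strictAntiOn hmono hanti ha hmaxa).trans
      (eq_of_isLocalMax_of_strictMonoOn_of_strictAntiOn hmono hanti hb hmaxb).symm
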